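/- arXiv:1508.05984 — 4 statements merged into one kernel-verified Lean document; each statement's English description precedes it below -/
import Mathlib

section
/- Let f : ℝ → ℝ be convex with left-derivative f'_- and second distributional derivative f'' (a positive Radon measure satisfying f''([a,b)) = f'_-(b) − f'_-(a)). Then for all real a ≤ b: f(b) − f(a) = f'_-(a)(b−a) + ∫_{[a,b)} (b−u) f''(du). -/
/-!
Convexity makes `f'` monotone, hence locally integrable, and the fundamental theorem of calculus
(Mathlib's right-derivative version, transported by `x ↦ -x`) gives `f b - f a = ∫_a^b f'`.
Since `f' t - f' a = μ [a, t)`, Tonelli for the indicator of `{u < t}` on `[a, b) × (a, b]` turns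
`∫_a^b (f' t - f' a) dt` into `∫_{[a, b)} (b - u) μ(du)`.
-/

open Set MeasureTheory

theorem intervalIntegral.integral_eq_sub_of_hasDeriv_left_of_le {E : Type*}
    [NormedAddCommGroup E] [NormedSpace ℝ E] [CompleteSpace E] {f f' : ℝ → E} {a b : ℝ}
    (hab : a ≤ b) (hcont : ContinuousOn f (Icc a b))
    (hderiv : ∀ x ∈ Ioo a b, HasDerivWithinAt f (f' x) (Iio x) x)
    (f'int : IntervalIntegrable f' volume a b) : ∫ y in a..b, f' y = f b - f a := by
  have hreflected : ∫ y in -b..-a, -f' (-y) = f (- -a) - f (- -b) := by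
    refine integral_eq_sub_of_hasDeriv_right_of_le (neg_le_neg hab)
      (hcont.comp continuousOn_neg fun x hx => ⟨le_neg.2 hx.2, neg_le.2 hx.1⟩)
      (fun x hx => ?_) ((IntervalIntegrable.iff_comp_neg enorm_ne_top).1 f'int).symm.neg
    have := (hderiv (-x) ⟨lt_neg.2 hx.2, neg_lt.2 hx.1⟩).scomp x
      (hasDerivAt_neg x).hasDerivWithinAt (s := Ioi x) fun _ => neg_lt_neg (a := x)
    simpa using this
  rw [intervalIntegral.integral_neg, intervalIntegral.integral_comp_neg] at hreflected
  simp only [neg_neg] at hreflected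
  rw [← neg_sub, ← hreflected, neg_neg]

theorem ConvexOn.monotone_of_hasDerivWithinAt_Iio {f f' : ℝ → ℝ} (hf : ConvexOn ℝ univ f)
    (hf' : ∀ x, HasDerivWithinAt f (f' x) (Iio x) x) : Monotone f' := by
  have hleft : f' = fun x => derivWithin f (Iio x) x :=
    funext fun x => ((hf' x).derivWithin (uniqueDiffWithinAt_Iio x)).symm
  rw [hleft, ← monotoneOn_univ, ← interior_univ]
  exact hf.monotoneOn_leftDeriv

theorem setLIntegral_Ico_ofReal_sub_eq_setLIntegral_measure_Ico {μ : Measure ℝ} {a b : ℝ}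
    (hμ : μ (Ico a b) ≠ ⊤) :
    ∫⁻ u in Ico a b, ENNReal.ofReal (b - u) ∂μ = ∫⁻ t in Ioc a b, μ (Ico a t) := by
  have : IsFiniteMeasure (μ.restrict (Ico a b)) := isFiniteMeasure_restrict.2 hμ
  have hlt : MeasurableSet {p : ℝ × ℝ | p.1 < p.2} :=
    measurableSet_lt measurable_fst measurable_snd
  calc ∫⁻ u in Ico a b, ENNReal.ofReal (b - u) ∂μ
      = ∫⁻ u in Ico a b, volume.restrict (Ioc a b) (Ioi u) ∂μ := by
        refine setLIntegral_congr_fun measurableSet_Ico fun u hu => ?_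
        rw [Measure.restrict_apply measurableSet_Ioi, inter_comm, Ioc_inter_Ioi,
          sup_eq_right.2 hu.1, Real.volume_Ioc]
    _ = (μ.restrict (Ico a b)).prod (volume.restrict (Ioc a b)) {p | p.1 < p.2} :=
        (Measure.prod_apply hlt).symm
    _ = ∫⁻ t in Ioc a b, μ.restrict (Ico a b) (Iio t) := Measure.prod_apply_symm hlt
    _ = ∫⁻ t in Ioc a b, μ (Ico a t) := by
        refine setLIntegral_congr_fun measurableSet_Ioc fun t ht => ?_
        rw [Measure.restrict_apply measurableSet_Iio, inter_comm, Ico_inter_Iio, min_eq_right ht.2]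

theorem setIntegral_Ico_sub_eq_setIntegral_toReal_measure_Ico {μ : Measure ℝ} {a b : ℝ}
    (hμ : μ (Ico a b) ≠ ⊤) :
    ∫ u in Ico a b, (b - u) ∂μ = ∫ t in Ioc a b, (μ (Ico a t)).toReal := by
  have hmono : Monotone fun t => μ (Ico a t) := fun s t hst =>
    measure_mono (Ico_subset_Ico_right hst)
  rw [integral_eq_lintegral_of_nonneg_ae, integral_toReal hmono.measurable.aemeasurable,
    setLIntegral_Ico_ofReal_sub_eq_setLIntegral_measure_Ico hμ]
  · filter_upwards [ae_restrict_mem measurableSet_Ioc] with t ht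
    exact (measure_mono (Ico_subset_Ico_right ht.2)).trans_lt hμ.lt_top
  · filter_upwards [ae_restrict_mem measurableSet_Ico] with u hu
    exact sub_nonneg.2 hu.2.le
  · fun_prop

/-- For a convex `f : ℝ → ℝ` with left derivative `f'` and second derivative measure `μ`
(satisfying `μ([a,b)) = f'(b) − f'(a)`), one has for all `a ≤ b`:
`f(b) − f(a) = f'(a)(b−a) + ∫_{[a,b)} (b−u) μ(du)`. -/
theorem convex_taylor_left_deriv
    (f f' : ℝ → ℝ) (μ : Measure ℝ)
    (hf : ConvexOn ℝ Set.univ f)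
    (hf' : ∀ y : ℝ, HasDerivWithinAt f (f' y) (Set.Iio y) y)
    (hμ : ∀ a b : ℝ, a ≤ b → μ (Set.Ico a b) = ENNReal.ofReal (f' b - f' a)) :
    ∀ a b : ℝ, a ≤ b →
      f b - f a = f' a * (b - a) + ∫ u in Set.Ico a b, (b - u) ∂μ := by
  intro a b hab
  have hmono : Monotone f' := hf.monotone_of_hasDerivWithinAt_Iio hf'
  have hf'int : IntervalIntegrable f' volume a b := hmono.intervalIntegrable
  have hlayers : ∫ t in Ioc a b, (μ (Ico a t)).toReal = ∫ t in a..b, (f' t - f' a) := by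
    rw [intervalIntegral.integral_of_le hab]
    refine setIntegral_congr_fun measurableSet_Ioc fun t ht => ?_
    rw [hμ a t ht.1.le, ENNReal.toReal_ofReal (sub_nonneg.2 (hmono ht.1.le))]
  have hftc : ∫ t in a..b, f' t = f b - f a :=
    intervalIntegral.integral_eq_sub_of_hasDeriv_left_of_le hab
      ((hf.continuousOn isOpen_univ).mono (subset_univ _)) (fun x _ => hf' x) hf'int
  rw [setIntegral_Ico_sub_eq_setIntegral_toReal_measure_Ico (by simp [hμ a b hab]), hlayers,
    intervalIntegral.integral_sub hf'int intervalIntegrable_const, hftc,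
    intervalIntegral.integral_const, smul_eq_mul]
  ring
end

section
/- Let x : [0,1] → ℝ be continuous, let π = (t_i)_{i=0}^m be a finite partition of [0,1], and let k ≥ 1 be an integer. Then there exists a finite partition π' ⊇ π of [0,1] such that Σ over consecutive points s of π' of (x(s') − x(s))² equals (1/k) · Σ over consecutive points of π of the squared increments, i.e. ⟨x⟩^{π'}_1 = ⟨x⟩^π_1 / k. -/
open Filter Set

/-- A finite partition of `[0,1]`. -/
def IsPartition01 (π : ℕ → ℝ) : Prop :=
  π 0 = 0 ∧ Monotone π ∧ ∃ N, ∀ k ≥ N, π k = 1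

/-- The quadratic variation of `x` along a finite partition `π`. -/
noncomputable def qvFull (x : ℝ → ℝ) (π : ℕ → ℝ) : ℝ :=
  ∑' i : ℕ, (x (π (i + 1)) - x (π i)) ^ 2

/-! On each block `[π q, π (q + 1)]` with increment `Δ = x (π (q + 1)) - x (π q)`, insert the
first times at which `x` reaches the levels `x (π q) + (r / k) Δ`, `0 < r < k` (they exist by the
intermediate value theorem). Taking *first* hitting times makes the new points increasing, and
every one of the `k` new increments is `Δ / k`, so the block contributes `k (Δ / k)² = Δ² / k`. -/

open Finset in
theorem sum_range_mul_comp_div {M : Type*} [AddCommMonoid M] (g : ℕ → M) (k N : ℕ) :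
    ∑ n ∈ range (k * N), g (n / k) = k • ∑ q ∈ range N, g q := by
  rcases Nat.eq_zero_or_pos k with rfl | hk
  · simp
  induction N with
  | zero => simp
  | succ N ih =>
    have hblock : ∀ r ∈ range k, g ((k * N + r) / k) = g N := fun r hr => by
      rw [Nat.mul_add_div hk, Nat.div_eq_of_lt (mem_range.1 hr), add_zero]
    rw [mul_add_one, sum_range_add, ih, sum_congr rfl hblock, sum_range_succ, smul_add,
      sum_const, card_range]

theorem AffineMap.lineMap_div_mem_uIcc {a b : ℝ} {k r : ℕ} (hr : r ≤ k) :
    lineMap a b (r / k : ℝ) ∈ uIcc a b := by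
  rw [← segment_eq_uIcc]
  exact lineMap_mem_segment ℝ a b
    ⟨by positivity, div_le_one_of_le₀ (by exact_mod_cast hr) k.cast_nonneg⟩

theorem AffineMap.lineMap_mem_uIcc_lineMap {a b s t : ℝ} (hs : 0 ≤ s) (hst : s ≤ t) :
    lineMap a b s ∈ uIcc a (lineMap a b t) := by
  simp only [mem_uIcc, lineMap_apply_ring']
  rcases le_total a b with h | h
  · left; constructor <;> nlinarith
  · right; constructor <;> nlinarith

/-- Junk (`sInf ∅ = 0`) unless `x` attains `y` on `[a, b]`. -/
noncomputable def firstHit (x : ℝ → ℝ) (a b y : ℝ) : ℝ :=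
  sInf (Icc a b ∩ x ⁻¹' {y})

section firstHit

variable {x : ℝ → ℝ} {a b y y' : ℝ}

theorem firstHit_mem (hab : a ≤ b) (hx : ContinuousOn x (Icc a b))
    (hy : y ∈ uIcc (x a) (x b)) : firstHit x a b y ∈ Icc a b ∩ x ⁻¹' {y} := by
  rw [← uIcc_of_le hab] at hx ⊢
  obtain ⟨t, ht, hxt⟩ := intermediate_value_uIcc hx hy
  rw [uIcc_of_le hab] at hx ⊢ ht
  exact (hx.preimage_isClosed_of_isClosed isClosed_Icc isClosed_singleton).csInf_mem
    ⟨t, ht, hxt⟩ (bddBelow_Icc.mono inter_subset_left)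

theorem firstHit_self (hab : a ≤ b) : firstHit x a b (x a) = a :=
  IsLeast.csInf_eq ⟨⟨left_mem_Icc.2 hab, rfl⟩, fun _ ht => ht.1.1⟩

/-- By the intermediate value theorem on `[a, firstHit x a b y]`. -/
theorem firstHit_le_firstHit (hab : a ≤ b) (hx : ContinuousOn x (Icc a b))
    (hy : y ∈ uIcc (x a) (x b)) (hy' : y' ∈ uIcc (x a) y) :
    firstHit x a b y' ≤ firstHit x a b y := by
  obtain ⟨⟨hat, htb⟩, hxt⟩ := firstHit_mem hab hx hy
  set t := firstHit x a b y
  have hxt : x t = y := hxt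
  have hxat : ContinuousOn x (uIcc a t) :=
    hx.mono (by rw [uIcc_of_le hat]; exact Icc_subset_Icc_right htb)
  obtain ⟨s, hs, hxs⟩ := intermediate_value_uIcc hxat (hxt ▸ hy')
  rw [uIcc_of_le hat] at hs
  exact (csInf_le (bddBelow_Icc.mono inter_subset_left) ⟨⟨hs.1, hs.2.trans htb⟩, hxs⟩).trans hs.2

end firstHit

theorem qvFull_eq_sum_range {x : ℝ → ℝ} {π : ℕ → ℝ} {N : ℕ} {c : ℝ} (hN : ∀ n ≥ N, π n = c) :
    qvFull x π = ∑ i ∈ Finset.range N, (x (π (i + 1)) - x (π i)) ^ 2 :=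
  tsum_eq_sum fun i hi => by
    have hi : N ≤ i := by simpa using hi
    rw [hN i hi, hN (i + 1) (by omega), sub_self, sq, mul_zero]

theorem IsPartition01.mem_Icc {π : ℕ → ℝ} (hπ : IsPartition01 π) (n : ℕ) : π n ∈ Icc 0 1 := by
  obtain ⟨h0, hmono, N, hN⟩ := hπ
  exact ⟨h0 ▸ hmono n.zero_le, hN (max n N) (le_max_right n N) ▸ hmono (le_max_left n N)⟩

open AffineMap

/-- The point of the refinement with index `n = k * q + r`, `r < k`: the first time in
`[π q, π (q + 1)]` at which `x` reaches the fraction `r / k` of its increment over that block. -/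
noncomputable def freedmanRefinement (x : ℝ → ℝ) (π : ℕ → ℝ) (k n : ℕ) : ℝ :=
  firstHit x (π (n / k)) (π (n / k + 1))
    (lineMap (x (π (n / k))) (x (π (n / k + 1))) ((n % k : ℕ) / k : ℝ))

section freedmanRefinement

variable {x : ℝ → ℝ} {π : ℕ → ℝ} {k : ℕ}

theorem freedmanRefinement_mul_add {q r : ℕ} (hr : r < k) :
    freedmanRefinement x π k (k * q + r) =
      firstHit x (π q) (π (q + 1)) (lineMap (x (π q)) (x (π (q + 1))) (r / k : ℝ)) := by
  have hk : 0 < k := by omega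
  simp only [freedmanRefinement, Nat.mul_add_div hk, Nat.div_eq_of_lt hr, add_zero,
    Nat.mul_add_mod, Nat.mod_eq_of_lt hr]

theorem freedmanRefinement_mul (hπ : Monotone π) (hk : 0 < k) (q : ℕ) :
    freedmanRefinement x π k (k * q) = π q := by
  rw [← add_zero (k * q), freedmanRefinement_mul_add hk, Nat.cast_zero, zero_div,
    lineMap_apply_zero, firstHit_self (hπ q.le_succ)]

theorem freedmanRefinement_mem (hπ : Monotone π)
    (hx : ∀ q, ContinuousOn x (Icc (π q) (π (q + 1)))) (hk : 0 < k) (n : ℕ) :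
    freedmanRefinement x π k n ∈ Icc (π (n / k)) (π (n / k + 1)) ∩
      x ⁻¹' {lineMap (x (π (n / k))) (x (π (n / k + 1))) ((n % k : ℕ) / k : ℝ)} :=
  firstHit_mem (hπ (n / k).le_succ) (hx _) (lineMap_div_mem_uIcc (n.mod_lt hk).le)

theorem map_freedmanRefinement_mul_add (hπ : Monotone π)
    (hx : ∀ q, ContinuousOn x (Icc (π q) (π (q + 1)))) (hk : 0 < k) {q r : ℕ} (hr : r ≤ k) :
    x (freedmanRefinement x π k (k * q + r)) =
      lineMap (x (π q)) (x (π (q + 1))) (r / k : ℝ) := by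
  rcases hr.lt_or_eq with hr | rfl
  · rw [freedmanRefinement_mul_add hr]
    exact (firstHit_mem (hπ q.le_succ) (hx q) (lineMap_div_mem_uIcc hr.le)).2
  · rw [← mul_add_one, freedmanRefinement_mul hπ hk, div_self (by positivity), lineMap_apply_one]

theorem freedmanRefinement_mul_add_le_succ (hπ : Monotone π)
    (hx : ∀ q, ContinuousOn x (Icc (π q) (π (q + 1)))) (hk : 0 < k) {q r : ℕ} (hr : r < k) :
    freedmanRefinement x π k (k * q + r) ≤ freedmanRefinement x π k (k * q + r + 1) := by
  rw [freedmanRefinement_mul_add hr, add_assoc]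
  rcases (Nat.add_one_le_of_lt hr).lt_or_eq with hr' | hr'
  · rw [freedmanRefinement_mul_add hr']
    refine firstHit_le_firstHit (hπ q.le_succ) (hx q) (lineMap_div_mem_uIcc hr'.le)
      (lineMap_mem_uIcc_lineMap (by positivity) ?_)
    gcongr
    exact_mod_cast r.le_succ
  · rw [hr', ← mul_add_one, freedmanRefinement_mul hπ hk]
    exact (firstHit_mem (hπ q.le_succ) (hx q) (lineMap_div_mem_uIcc hr.le)).1.2

theorem monotone_freedmanRefinement (hπ : Monotone π)
    (hx : ∀ q, ContinuousOn x (Icc (π q) (π (q + 1)))) (hk : 0 < k) :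
    Monotone (freedmanRefinement x π k) := by
  refine monotone_nat_of_le_succ fun n => ?_
  rw [← Nat.div_add_mod n k]
  exact freedmanRefinement_mul_add_le_succ hπ hx hk (n.mod_lt hk)

theorem map_freedmanRefinement_succ_sub (hπ : Monotone π)
    (hx : ∀ q, ContinuousOn x (Icc (π q) (π (q + 1)))) (hk : 0 < k) (n : ℕ) :
    x (freedmanRefinement x π k (n + 1)) - x (freedmanRefinement x π k n) =
      (x (π (n / k + 1)) - x (π (n / k))) / k := by
  obtain ⟨q, r, hr, rfl⟩ : ∃ q r, r < k ∧ n = k * q + r :=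
    ⟨n / k, n % k, n.mod_lt hk, (n.div_add_mod k).symm⟩
  rw [add_assoc, map_freedmanRefinement_mul_add hπ hx hk hr,
    map_freedmanRefinement_mul_add hπ hx hk hr.le, Nat.mul_add_div hk, Nat.div_eq_of_lt hr,
    add_zero]
  simp only [lineMap_apply_ring']
  push_cast
  ring

theorem range_subset_range_freedmanRefinement (hπ : Monotone π) (hk : 0 < k) :
    range π ⊆ range (freedmanRefinement x π k) := by
  rintro _ ⟨q, rfl⟩
  exact ⟨k * q, freedmanRefinement_mul hπ hk q⟩

theorem freedmanRefinement_of_mul_le (hπ : Monotone π)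
    (hx : ∀ q, ContinuousOn x (Icc (π q) (π (q + 1)))) (hk : 0 < k) {N : ℕ} {c : ℝ}
    (hN : ∀ n ≥ N, π n = c) {n : ℕ} (hn : k * N ≤ n) : freedmanRefinement x π k n = c := by
  have hq : N ≤ n / k := (Nat.le_div_iff_mul_le hk).2 (by linarith)
  have hmem := (freedmanRefinement_mem hπ hx hk n).1
  rw [hN _ hq, hN _ (by omega)] at hmem
  exact le_antisymm hmem.2 hmem.1

theorem IsPartition01.freedmanRefinement (hπ : IsPartition01 π)
    (hx : ∀ q, ContinuousOn x (Icc (π q) (π (q + 1)))) (hk : 0 < k) :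
    IsPartition01 (freedmanRefinement x π k) := by
  obtain ⟨h0, hmono, N, hN⟩ := hπ
  refine ⟨?_, monotone_freedmanRefinement hmono hx hk, k * N,
    fun n hn => freedmanRefinement_of_mul_le hmono hx hk hN hn⟩
  rw [← h0, ← freedmanRefinement_mul hmono hk 0, mul_zero]

theorem qvFull_freedmanRefinement (hπ : IsPartition01 π)
    (hx : ∀ q, ContinuousOn x (Icc (π q) (π (q + 1)))) (hk : 0 < k) :
    qvFull x (freedmanRefinement x π k) = qvFull x π / k := by
  obtain ⟨-, hmono, N, hN⟩ := hπ
  rw [qvFull_eq_sum_range fun n => freedmanRefinement_of_mul_le hmono hx hk hN,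
    qvFull_eq_sum_range hN]
  simp only [map_freedmanRefinement_succ_sub hmono hx hk]
  rw [sum_range_mul_comp_div (fun q => ((x (π (q + 1)) - x (π q)) / k) ^ 2)]
  simp only [div_pow, ← Finset.sum_div, nsmul_eq_mul]
  field_simp

end freedmanRefinement

/-- **Freedman's construction.** For continuous `x : [0,1] → ℝ`, a finite partition `π`
of `[0,1]` and an integer `k ≥ 1`, there is a refinement `π' ⊇ π` whose quadratic
variation is exactly `⟨x⟩^π_1 / k`. -/
theorem exists_refinement_qv_div
    (x : ℝ → ℝ) (π : ℕ → ℝ) (k : ℕ)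
    (hx : ContinuousOn x (Set.Icc 0 1))
    (hπ : IsPartition01 π) (hk : 1 ≤ k) :
    ∃ π' : ℕ → ℝ, IsPartition01 π' ∧ Set.range π ⊆ Set.range π' ∧
      qvFull x π' = qvFull x π / k := by
  have hxπ : ∀ q, ContinuousOn x (Icc (π q) (π (q + 1))) := fun q =>
    hx.mono (Icc_subset_Icc (hπ.mem_Icc q).1 (hπ.mem_Icc (q + 1)).2)
  exact ⟨freedmanRefinement x π k, hπ.freedmanRefinement hxπ hk,
    range_subset_range_freedmanRefinement hπ.2.1 hk, qvFull_freedmanRefinement hπ hxπ hk⟩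
end

section
/- Let x : [0,∞) → ℝ be continuous and ε > 0. Let π_{εℤ} be the Lebesgue partition of x at levels εℤ, i.e. t_0 = 0 and t_{k+1} := inf{t > t_k : x_t ∈ εℤ, x_t ≠ x_{t_k}}. Then the discrete local time at level 0 satisfies |L^{π_{εℤ}}_t(0)/2 − ε·D^ε_t(0)| ≤ 2ε for all t, where D^ε_t(0) is the number of downcrossings of [0, ε] by (x_s)_{s≤t}. -/
/-!
Along the Lebesgue partition the path passes from one point of `εℤ` to a neighbouring one
without meeting any other level of `εℤ` in between. Hence a completed step contributes `ε` to
`L^π_t(0)/2` if it goes from `0` up to `ε` and nothing otherwise, while the step in progress at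
time `t` contributes at most `ε`; so `L^π_t(0)/2` is within `ε` of `ε U`, where `U` counts the
up-steps from `0` to `ε` started before `t`. Between two consecutive downcrossings of `[0, ε]`
the partition makes such an up-step, and between two consecutive up-steps the path makes a
downcrossing, so `U` and `D^ε_t(0)` differ by at most one.
-/

open Filter Set

/-- The discrete local time `L^π_t(u)`. -/
noncomputable def Ldisc (x : ℝ → ℝ) (π : ℕ → ℝ) (t u : ℝ) : ℝ :=
  2 * ∑' j : ℕ,
    (Set.Ico (min (x (min (π j) t)) (x (min (π (j + 1)) t)))
             (max (x (min (π j) t)) (x (min (π (j + 1)) t)))).indicator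
      (fun v => |x (min (π (j + 1)) t) - v|) u

/-- `π` is the Lebesgue partition of `x` at the levels `εℤ`: `t₀ = 0` and `t_{k+1}` is the
first time after `t_k` at which `x` hits a new point of `εℤ`. -/
def IsLebesgueZPartition (x : ℝ → ℝ) (ε : ℝ) (π : ℕ → ℝ) : Prop :=
  π 0 = 0 ∧ StrictMono π ∧ Tendsto π atTop atTop ∧
  (∀ k, (∃ m : ℤ, x (π (k + 1)) = ε * m) ∧ x (π (k + 1)) ≠ x (π k)) ∧
  (∀ k s, π k < s → s < π (k + 1) → ¬((∃ m : ℤ, x s = ε * m) ∧ x s ≠ x (π k)))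

/-- The number of downcrossings of `[u, u+ε]` by `(x_s)_{s≤t}`. -/
noncomputable def downcross (x : ℝ → ℝ) (u ε t : ℝ) : ℕ :=
  sSup {k : ℕ | ∃ a b : Fin k → ℝ,
    (∀ i, 0 ≤ a i) ∧ (∀ i, b i ≤ t) ∧ (∀ i, a i < b i) ∧
    (∀ i j, i < j → b i < a j) ∧
    (∀ i, x (a i) = u + ε) ∧ (∀ i, x (b i) = u)}

theorem le_mul_intCast_of_pos {ε : ℝ} (hε : 0 < ε) {m : ℤ} (h : 0 < ε * m) : ε ≤ ε * m := by
  have hm : (1 : ℝ) ≤ m := by exact_mod_cast (pos_of_mul_pos_right h hε.le : (0 : ℝ) < m)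
  nlinarith

noncomputable def localTimeStep (a b : ℝ) : ℝ :=
  (Ico (min a b) (max a b)).indicator (fun v => |b - v|) 0

theorem Ldisc_zero_eq_tsum (x : ℝ → ℝ) (π : ℕ → ℝ) (t : ℝ) :
    Ldisc x π t 0 = 2 * ∑' j, localTimeStep (x (min (π j) t)) (x (min (π (j + 1)) t)) := rfl

section localTimeStep

variable {ε a b : ℝ}

theorem localTimeStep_self (a : ℝ) : localTimeStep a a = 0 := by
  simp [localTimeStep]

theorem localTimeStep_nonneg (a b : ℝ) : 0 ≤ localTimeStep a b :=
  indicator_nonneg (fun _ _ => abs_nonneg _) 0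

theorem localTimeStep_le (hε : 0 < ε) (hgap : ∀ m : ℤ, ε * m ∉ uIoo a b) :
    localTimeStep a b ≤ ε := by
  unfold localTimeStep
  by_cases h0 : (0 : ℝ) ∈ Ico (min a b) (max a b)
  · rw [indicator_of_mem h0, sub_zero, abs_le]
    obtain ⟨hmin, hmax⟩ := h0
    constructor
    · by_contra! hb
      exact hgap (-1) ⟨by push_cast; linarith [min_le_right a b], by push_cast; linarith⟩
    · by_contra! hb
      exact hgap 1 ⟨by push_cast; linarith, by push_cast; linarith [le_max_right a b]⟩
  · rw [indicator_of_notMem h0]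
    exact hε.le

theorem localTimeStep_eq_ite (hε : 0 < ε) (hgap : ∀ m : ℤ, ε * m ∉ uIoo a b)
    (hb : ∃ m : ℤ, b = ε * m) : localTimeStep a b = if a = 0 ∧ b = ε then ε else 0 := by
  unfold localTimeStep
  by_cases h0 : (0 : ℝ) ∈ Ico (min a b) (max a b)
  · rw [indicator_of_mem h0, sub_zero]
    obtain ⟨hmin, hmax⟩ := h0
    have hmin0 : min a b = 0 := by
      by_contra hne
      exact hgap 0 ⟨by simpa using lt_of_le_of_ne hmin hne, by simpa using hmax⟩
    rcases eq_or_ne b 0 with rfl | hb0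
    · simp [hε.ne]
    have ha : a = 0 := by
      rcases min_choice a b with h | h <;> rw [h] at hmin0 <;> tauto
    subst ha
    have hbpos : 0 < b := lt_of_le_of_ne (hmin0 ▸ min_le_right 0 b) (Ne.symm hb0)
    have hbε : b = ε := by
      obtain ⟨m, rfl⟩ := hb
      refine le_antisymm (not_lt.1 fun hlt => hgap 1 ?_) (le_mul_intCast_of_pos hε hbpos)
      exact ⟨by simp [hε], by simp [hlt]⟩
    simp [hbε, abs_of_pos hε]
  · rw [indicator_of_notMem h0, if_neg]
    rintro ⟨rfl, rfl⟩
    exact h0 ⟨by simp [hε.le], by simp [hε]⟩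

end localTimeStep

theorem Continuous.exists_crossing_mapsTo_Ioo {α δ : Type*} [ConditionallyCompleteLinearOrder α]
    [TopologicalSpace α] [OrderTopology α] [DenselyOrdered α] [LinearOrder δ]
    [TopologicalSpace δ] [OrderClosedTopology δ] {f : α → δ} (hf : Continuous f)
    {c d : δ} {s₁ s₂ : α} (hcd : c < d) (hs : s₁ ≤ s₂) (h₁ : f s₁ = c) (h₂ : f s₂ = d) :
    ∃ σ τ, s₁ ≤ σ ∧ σ < τ ∧ τ ≤ s₂ ∧ f σ = c ∧ f τ = d ∧ MapsTo f (Ioo σ τ) (Ioo c d) := by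
  set T := Icc s₁ s₂ ∩ f ⁻¹' {d}
  have hT : IsCompact T := isCompact_Icc.inter_right (isClosed_singleton.preimage hf)
  obtain ⟨⟨hτ₁, hτ₂⟩, hfτ⟩ : sInf T ∈ T := hT.sInf_mem ⟨s₂, ⟨hs, le_rfl⟩, h₂⟩
  set τ := sInf T
  set S := Icc s₁ τ ∩ f ⁻¹' {c}
  have hS : IsCompact S := isCompact_Icc.inter_right (isClosed_singleton.preimage hf)
  obtain ⟨⟨hσ₁, hστ⟩, hfσ⟩ : sSup S ∈ S := hS.sSup_mem ⟨s₁, ⟨le_rfl, hτ₁⟩, h₁⟩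
  set σ := sSup S
  have hστ' : σ < τ := lt_of_le_of_ne hστ fun h => hcd.ne (by rw [← hfσ, ← hfτ, h])
  refine ⟨σ, τ, hσ₁, hστ', hτ₂, hfσ, hfτ, fun u ⟨hσu, huτ⟩ => ⟨?_, ?_⟩⟩
  · -- a return to `c` after `u` would contradict the maximality of `σ`
    by_contra! hu
    obtain ⟨v, ⟨huv, hvτ⟩, hfv⟩ :=
      intermediate_value_Icc huτ.le hf.continuousOn ⟨hu, hfτ ▸ hcd.le⟩
    exact (hσu.trans_le huv).not_ge
      (le_csSup hS.bddAbove ⟨⟨hσ₁.trans (hσu.le.trans huv), hvτ⟩, hfv⟩)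
  · -- a visit to `d` before `u` would contradict the minimality of `τ`
    by_contra! hu
    obtain ⟨v, ⟨hs₁v, hvu⟩, hfv⟩ :=
      intermediate_value_Icc (hσ₁.trans hσu.le) hf.continuousOn ⟨h₁ ▸ hcd.le, hu⟩
    exact (hvu.trans_lt huτ).not_ge
      (csInf_le hT.bddBelow ⟨⟨hs₁v, hvu.trans (huτ.le.trans hτ₂)⟩, hfv⟩)

theorem Nat.exists_forall_lt_iff_of_antitone {p : ℕ → Prop} (hp : Antitone p)
    (h : ∃ n, ¬p n) : ∃ N, ∀ j, j < N ↔ p j := by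
  classical
  refine ⟨Nat.find h, fun j => ⟨fun hj => not_not.1 (Nat.find_min h hj), fun hj => ?_⟩⟩
  by_contra! hNj
  exact Nat.find_spec h (hp hNj hj)

theorem Monotone.exists_forall_lt_iff_lt {α : Type*} [LinearOrder α] {u : ℕ → α}
    (hu : Monotone u) (htop : Tendsto u atTop atTop) (t : α) : ∃ N, ∀ j, j < N ↔ u j < t :=
  Nat.exists_forall_lt_iff_of_antitone (fun _ _ hij => (hu hij).trans_lt)
    (((htop.eventually_ge_atTop t).exists).imp fun _ => not_lt.2)

theorem Monotone.exists_mem_Ico {α : Type*} [LinearOrder α] [NoMaxOrder α] {u : ℕ → α}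
    (hu : Monotone u) (htop : Tendsto u atTop atTop) {s : α} (hs : u 0 ≤ s) :
    ∃ k, s ∈ Ico (u k) (u (k + 1)) := by
  obtain ⟨N, hN⟩ := Nat.exists_forall_lt_iff_of_antitone (p := fun j => u j ≤ s)
    (fun _ _ hij => (hu hij).trans) (((htop.eventually_gt_atTop s).exists).imp fun _ => not_le.2)
  obtain ⟨k, rfl⟩ := Nat.exists_eq_add_one_of_ne_zero ((hN 0).2 hs).ne'
  exact ⟨k, (hN k).1 k.lt_add_one, not_le.1 fun h => lt_irrefl _ ((hN _).2 h)⟩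

def IsUpStep (x : ℝ → ℝ) (ε : ℝ) (π : ℕ → ℝ) (j : ℕ) : Prop :=
  x (π j) = 0 ∧ x (π (j + 1)) = ε

noncomputable instance (x : ℝ → ℝ) (ε : ℝ) (π : ℕ → ℝ) : DecidablePred (IsUpStep x ε π) :=
  fun _ => inferInstanceAs (Decidable (_ ∧ _))

noncomputable def upSteps (x : ℝ → ℝ) (ε : ℝ) (π : ℕ → ℝ) (N : ℕ) : Finset ℕ :=
  {j ∈ Finset.range N | IsUpStep x ε π j}

theorem mem_upSteps {x : ℝ → ℝ} {ε : ℝ} {π : ℕ → ℝ} {N j : ℕ} :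
    j ∈ upSteps x ε π N ↔ j < N ∧ IsUpStep x ε π j := by
  simp [upSteps]

def downcrossSet (x : ℝ → ℝ) (u ε t : ℝ) : Set ℕ :=
  {k | ∃ a b : Fin k → ℝ,
    (∀ i, 0 ≤ a i) ∧ (∀ i, b i ≤ t) ∧ (∀ i, a i < b i) ∧
    (∀ i j, i < j → b i < a j) ∧
    (∀ i, x (a i) = u + ε) ∧ (∀ i, x (b i) = u)}

theorem downcross_eq_sSup (x : ℝ → ℝ) (u ε t : ℝ) :
    downcross x u ε t = sSup (downcrossSet x u ε t) := rfl

theorem zero_mem_downcrossSet (x : ℝ → ℝ) (u ε t : ℝ) : 0 ∈ downcrossSet x u ε t :=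
  ⟨Fin.elim0, Fin.elim0, by simp⟩

namespace IsLebesgueZPartition

variable {x : ℝ → ℝ} {ε : ℝ} {π : ℕ → ℝ}

theorem strictMono (hπ : IsLebesgueZPartition x ε π) : StrictMono π := hπ.2.1

theorem tendsto_atTop (hπ : IsLebesgueZPartition x ε π) : Tendsto π atTop atTop := hπ.2.2.1

theorem notMem_uIoo (hx : Continuous x) (hπ : IsLebesgueZPartition x ε π) {j : ℕ} {s : ℝ}
    (hs : s ∈ Icc (π j) (π (j + 1))) (m : ℤ) : ε * m ∉ uIoo (x (π j)) (x s) := by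
  intro hm
  obtain ⟨-, -, -, -, hfirst⟩ := hπ
  obtain ⟨u, hu, hxu⟩ := intermediate_value_uIcc hx.continuousOn (uIoo_subset_uIcc_self hm)
  rw [uIcc_of_le hs.1] at hu
  have hxj : x u ≠ x (π j) := fun h => left_notMem_uIoo (hxu ▸ h ▸ hm)
  have hxs : x u ≠ x s := fun h => right_notMem_uIoo (hxu ▸ h ▸ hm)
  exact hfirst j u (hu.1.lt_of_ne fun h => hxj (h ▸ rfl))
    ((hu.2.lt_of_ne fun h => hxs (h ▸ rfl)).trans_le hs.2) ⟨⟨m, hxu⟩, hxj⟩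

theorem exists_upStep (hx : Continuous x) (hε : 0 < ε) (hπ : IsLebesgueZPartition x ε π)
    {s₁ s₂ : ℝ} (h₀ : 0 ≤ s₁) (hs : s₁ ≤ s₂) (h₁ : x s₁ = 0) (h₂ : x s₂ = ε) :
    ∃ k, IsUpStep x ε π k ∧ s₁ < π (k + 1) ∧ π (k + 1) ≤ s₂ := by
  obtain ⟨hπ0, hmono, htop, hlevel, hfirst⟩ := hπ
  obtain ⟨σ, τ, hσ₁, hστ, hτ₂, hxσ, hxτ, hbetween⟩ :=
    hx.exists_crossing_mapsTo_Ioo hε hs h₁ h₂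
  obtain ⟨k, hkσ, hσk⟩ := hmono.monotone.exists_mem_Ico htop (hπ0 ▸ h₀.trans hσ₁)
  have hxk : x (π k) = 0 := by
    rcases hkσ.lt_or_eq with hlt | rfl
    · by_contra hne
      exact hfirst k σ hlt hσk ⟨⟨0, by simp [hxσ]⟩, hxσ ▸ Ne.symm hne⟩
    · exact hxσ
  have hkτ : π (k + 1) ≤ τ := by
    by_contra! hτk
    exact hfirst k τ (hkσ.trans_lt hστ) hτk ⟨⟨1, by simp [hxτ]⟩, by rw [hxτ, hxk]; exact hε.ne'⟩
  refine ⟨k, ⟨hxk, ?_⟩, hσ₁.trans_lt hσk, hkτ.trans hτ₂⟩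
  rcases hkτ.lt_or_eq with hlt | heq
  · -- the level `x (π (k + 1)) ∈ εℤ` would lie strictly between `0` and `ε`
    obtain ⟨hpos, hltε⟩ := hbetween ⟨hσk, hlt⟩
    obtain ⟨m, hm⟩ := (hlevel k).1
    rw [hm] at hpos hltε
    exact absurd (le_mul_intCast_of_pos hε hpos) hltε.not_ge
  · rw [heq, hxτ]

theorem localTimeStep_le (hx : Continuous x) (hε : 0 < ε) (hπ : IsLebesgueZPartition x ε π)
    (j : ℕ) {s : ℝ} (hs : s ∈ Icc (π j) (π (j + 1))) : localTimeStep (x (π j)) (x s) ≤ ε :=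
  _root_.localTimeStep_le hε (hπ.notMem_uIoo hx hs)

theorem localTimeStep_eq_ite (hx : Continuous x) (hε : 0 < ε)
    (hπ : IsLebesgueZPartition x ε π) (j : ℕ) :
    localTimeStep (x (π j)) (x (π (j + 1))) = if IsUpStep x ε π j then ε else 0 :=
  _root_.localTimeStep_eq_ite hε (hπ.notMem_uIoo hx ⟨(hπ.strictMono j.lt_succ_self).le, le_rfl⟩)
    (hπ.2.2.2.1 j).1

theorem abs_Ldisc_div_two_sub_le (hx : Continuous x) (hε : 0 < ε)
    (hπ : IsLebesgueZPartition x ε π) {t : ℝ} {N : ℕ} (hN : ∀ j, j < N ↔ π j < t) :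
    |Ldisc x π t 0 / 2 - ε * (upSteps x ε π N).card| ≤ ε := by
  set step := fun j => localTimeStep (x (min (π j) t)) (x (min (π (j + 1)) t))
  have hmono := hπ.strictMono.monotone
  have hvanish : ∀ j ∉ Finset.range N, step j = 0 := fun j hj => by
    have htj : t ≤ π j := not_lt.1 fun h => hj (Finset.mem_range.2 ((hN j).2 h))
    simp only [step, min_eq_right htj, min_eq_right (htj.trans (hmono j.le_succ)),
      localTimeStep_self]
  have hcard : ε * (upSteps x ε π N).card =
      ∑ j ∈ Finset.range N, if IsUpStep x ε π j then ε else 0 := by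
    rw [Finset.sum_ite, Finset.sum_const_zero, add_zero, Finset.sum_const, nsmul_eq_mul, mul_comm]
    rfl
  rw [Ldisc_zero_eq_tsum, tsum_eq_sum hvanish, mul_div_cancel_left₀ _ two_ne_zero, hcard]
  rcases N with _ | M
  · simp [hε.le]
  have hfull : ∀ j ∈ Finset.range M, step j = if IsUpStep x ε π j then ε else 0 := fun j hj => by
    have hj := Finset.mem_range.1 hj
    simp only [step, min_eq_left ((hN j).1 (by omega)).le,
      min_eq_left ((hN (j + 1)).1 (by omega)).le, hπ.localTimeStep_eq_ite hx hε]
  have hMt : π M < t := (hN M).1 M.lt_succ_self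
  have hlast : step M ∈ Icc 0 ε := by
    refine ⟨localTimeStep_nonneg _ _, ?_⟩
    simp only [step, min_eq_left hMt.le]
    exact hπ.localTimeStep_le hx hε M ⟨le_min (hmono M.le_succ) hMt.le, min_le_left _ _⟩
  rw [Finset.sum_range_succ, Finset.sum_range_succ, Finset.sum_congr rfl hfull, abs_le]
  split_ifs <;> constructor <;> linarith [hlast.1, hlast.2]

theorem le_card_upSteps_add_one (hx : Continuous x) (hε : 0 < ε)
    (hπ : IsLebesgueZPartition x ε π) {t : ℝ} {N : ℕ} (hN : ∀ j, j < N ↔ π j < t) {k : ℕ}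
    (hk : k ∈ downcrossSet x 0 ε t) : k ≤ (upSteps x ε π N).card + 1 := by
  obtain ⟨a, b, ha₀, hbt, hab, hba, hxa, hxb⟩ := hk
  rcases k with _ | n
  · omega
  have hb : Monotone b := fun i j hij => by
    rcases hij.lt_or_eq with h | rfl
    exacts [(hba i j h).trans (hab j) |>.le, le_rfl]
  choose g hg hbg hga using fun i : Fin n =>
    hπ.exists_upStep hx hε ((ha₀ _).trans (hab _).le) (hba _ _ i.castSucc_lt_succ).le
      (hxb i.castSucc) ((hxa i.succ).trans (zero_add ε))
  have hgmono : StrictMono g := fun i j hij => by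
    have := hπ.strictMono.lt_iff_lt.1 <|
      calc π (g i + 1) ≤ a i.succ := hga i
        _ < b i.succ := hab i.succ
        _ ≤ b j.castSucc := hb (Fin.succ_le_castSucc_iff.2 hij)
        _ < π (g j + 1) := hbg j
    omega
  have hmaps : ∀ i, g i ∈ upSteps x ε π N := fun i => by
    have := (hN (g i + 1)).2 ((hga i).trans_lt ((hab _).trans_le (hbt _)))
    exact mem_upSteps.2 ⟨by omega, hg i⟩
  simpa using Finset.card_le_card_of_injOn g (s := Finset.univ) (fun i _ => hmaps i)
    hgmono.injective.injOn

theorem downcross_le_card_upSteps_add_one (hx : Continuous x) (hε : 0 < ε)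
    (hπ : IsLebesgueZPartition x ε π) {t : ℝ} {N : ℕ} (hN : ∀ j, j < N ↔ π j < t) :
    downcross x 0 ε t ≤ (upSteps x ε π N).card + 1 :=
  csSup_le ⟨0, zero_mem_downcrossSet x 0 ε t⟩ fun _ => hπ.le_card_upSteps_add_one hx hε hN

theorem card_upSteps_sub_one_mem_downcrossSet (hε : 0 < ε) (hπ : IsLebesgueZPartition x ε π)
    {t : ℝ} {N : ℕ} (hN : ∀ j, j < N ↔ π j < t) :
    (upSteps x ε π N).card - 1 ∈ downcrossSet x 0 ε t := by
  rcases hS : (upSteps x ε π N).card with _ | n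
  · exact zero_mem_downcrossSet x 0 ε t
  set e := (upSteps x ε π N).orderEmbOfFin hS
  have he (i) : e i < N ∧ IsUpStep x ε π (e i) :=
    mem_upSteps.1 (Finset.orderEmbOfFin_mem _ hS i)
  have hmono := hπ.strictMono
  refine ⟨fun i => π (e i.castSucc + 1), fun i => π (e i.succ), fun i => ?_, fun i => ?_,
    fun i => ?_, fun i j hij => ?_, fun i => ?_, fun i => (he _).2.1⟩
  · exact hπ.1 ▸ hmono.monotone (Nat.zero_le _)
  · exact ((hN _).1 (he _).1).le
  · -- the up-step at `e i.castSucc` ends at `ε`, so the next one starts strictly later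
    have hlt : e i.castSucc < e i.succ := e.strictMono i.castSucc_lt_succ
    have hne : e i.castSucc + 1 ≠ e i.succ := fun h => hε.ne' <| by
      rw [← (he i.castSucc).2.2, ← (he i.succ).2.1, h]
    exact hmono (by omega)
  · have := e.monotone (Fin.succ_le_castSucc_iff.2 hij)
    exact hmono (by omega)
  · rw [zero_add]; exact (he _).2.2

theorem card_upSteps_le_downcross_add_one (hx : Continuous x) (hε : 0 < ε)
    (hπ : IsLebesgueZPartition x ε π) {t : ℝ} {N : ℕ} (hN : ∀ j, j < N ↔ π j < t) :
    (upSteps x ε π N).card ≤ downcross x 0 ε t + 1 := by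
  have := le_csSup ⟨_, fun _ => hπ.le_card_upSteps_add_one hx hε hN⟩
    (hπ.card_upSteps_sub_one_mem_downcrossSet hε hN)
  rw [← downcross_eq_sSup] at this
  omega

end IsLebesgueZPartition

/-- Along the Lebesgue partition at levels `εℤ`, the discrete local time at level `0`
is within `2ε` of `ε` times the number of downcrossings of `[0,ε]`:
`|L^{π_{εℤ}}_t(0)/2 − ε·D^ε_t(0)| ≤ 2ε`. -/
theorem Ldisc_levy_downcrossing
    (x : ℝ → ℝ) (ε : ℝ) (π : ℕ → ℝ)
    (hx : Continuous x) (hε : 0 < ε)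
    (hπ : IsLebesgueZPartition x ε π) :
    ∀ t : ℝ, 0 ≤ t →
      |Ldisc x π t 0 / 2 - ε * (downcross x 0 ε t : ℝ)| ≤ 2 * ε := by
  intro t _
  obtain ⟨N, hN⟩ := hπ.strictMono.monotone.exists_forall_lt_iff_lt hπ.tendsto_atTop t
  have hL := hπ.abs_Ldisc_div_two_sub_le hx hε hN
  have hUD : ((upSteps x ε π N).card : ℝ) ≤ downcross x 0 ε t + 1 := by
    exact_mod_cast hπ.card_upSteps_le_downcross_add_one hx hε hN
  have hDU : (downcross x 0 ε t : ℝ) ≤ (upSteps x ε π N).card + 1 := by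
    exact_mod_cast hπ.downcross_le_card_upSteps_add_one hx hε hN
  rw [abs_le] at hL ⊢
  constructor <;>
    linarith [mul_le_mul_of_nonneg_left hUD hε.le, mul_le_mul_of_nonneg_left hDU hε.le]
end

section
/- Let x : [0,∞) → ℝ be continuous, τ : [0,∞) → [0,∞) a strictly increasing continuous bijection with τ(0) = 0, and P = (p_k)_{k∈ℤ} a partition of ℝ. Then the Lebesgue partition of x∘τ at levels P equals the image under τ^{-1} of the Lebesgue partition of x at levels P: π_P(x∘τ) = τ^{-1}(π_P(x)). Moreover O_{τ^{-1}(t)}(x∘τ, τ^{-1}(π)) = O_t(x, π) for any partition π. -/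
open Filter Set

/-- The oscillation `O_T(y,π)`. -/
noncomputable def osc (y : ℝ → ℝ) (π : ℕ → ℝ) (T : ℝ) : ℝ :=
  ⨆ k : ℕ, ⨆ a ∈ Set.Ico (π k) (π (k + 1)) ∩ Set.Icc 0 T,
    ⨆ b ∈ Set.Ico (π k) (π (k + 1)) ∩ Set.Icc 0 T, |y b - y a|

/-- `π` is the Lebesgue partition of `y` at the set of levels `P`: `t₀ = 0` and `t_{k+1}`
is the first time after `t_k` at which `y` hits some level in `P` different from
`y(t_k)`. -/
def IsLebesguePartition (y : ℝ → ℝ) (P : Set ℝ) (π : ℕ → ℝ) : Prop :=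
  π 0 = 0 ∧ StrictMono π ∧ Tendsto π atTop atTop ∧
  (∀ k, y (π (k + 1)) ∈ P ∧ y (π (k + 1)) ≠ y (π k)) ∧
  (∀ k s, π k < s → s < π (k + 1) → ¬(y s ∈ P ∧ y s ≠ y (π k)))

/-- The range of the "indicator-sup" function is `insert 0 (g '' T)` when `T ≠ univ`. -/
lemma range_indSup (T : Set ℝ) (g : ℝ → ℝ) (hT : T ≠ univ) :
    (Set.range fun b => ⨆ _ : b ∈ T, g b) = insert 0 (g '' T) := by
  ext y
  simp only [mem_range, mem_insert_iff, mem_image]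
  constructor
  · rintro ⟨b, rfl⟩
    by_cases hb : b ∈ T
    · exact Or.inr ⟨b, hb, (ciSup_pos (f := fun _ => g b) hb).symm⟩
    · refine Or.inl ?_
      haveI : IsEmpty (b ∈ T) := ⟨hb⟩
      exact Real.iSup_of_isEmpty (fun _ : b ∈ T => g b)
  · rintro (rfl | ⟨b, hb, rfl⟩)
    · obtain ⟨b, hb⟩ : ∃ b, b ∉ T := by
        by_contra h
        push_neg at h
        exact hT (eq_univ_of_forall h)
      haveI : IsEmpty (b ∈ T) := ⟨hb⟩
      exact ⟨b, Real.iSup_of_isEmpty (fun _ : b ∈ T => g b)⟩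
    · exact ⟨b, ciSup_pos (f := fun _ => g b) hb⟩

/-- Change of variables for a bounded `biSup` over an image set in `ℝ`. -/
lemma real_biSup_image (f g : ℝ → ℝ) (s : Set ℝ) (hs : s ≠ univ) (hfs : f '' s ≠ univ) :
    ⨆ b ∈ f '' s, g b = ⨆ a ∈ s, g (f a) := by
  have h1 : (⨆ b ∈ f '' s, g b) = sSup (Set.range fun b => ⨆ _ : b ∈ f '' s, g b) := rfl
  have h2 : (⨆ a ∈ s, g (f a)) = sSup (Set.range fun a => ⨆ _ : a ∈ s, g (f a)) := rfl
  rw [h1, h2, range_indSup _ _ hfs, range_indSup s (fun a => g (f a)) hs, Set.image_image]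

/-- For a continuous strictly increasing bijective time change `τ` of `[0,∞)` with inverse
`σ = τ⁻¹`, the Lebesgue partition of `x∘τ` at the levels `P` is the image under `τ⁻¹` of
the Lebesgue partition of `x`; moreover `O_{τ⁻¹(t)}(x∘τ, τ⁻¹(π)) = O_t(x,π)` for any
partition `π`. -/
theorem lebesgue_partition_time_change
    (x τ σ : ℝ → ℝ) (P : ℤ → ℝ)
    (hx : Continuous x)
    (hτc : Continuous τ) (hτm : StrictMono τ) (hτ0 : τ 0 = 0)
    (hτtop : Tendsto τ atTop atTop)
    (hστ : ∀ s : ℝ, 0 ≤ s → σ (τ s) = s)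
    (hτσ : ∀ s : ℝ, 0 ≤ s → τ (σ s) = s)
    (hPm : StrictMono P) (hP0 : P 0 = 0)
    (hPtop : Tendsto P atTop atTop) (hPbot : Tendsto P atBot atBot) :
    (∀ π : ℕ → ℝ, IsLebesguePartition x (Set.range P) π →
      IsLebesguePartition (fun s => x (τ s)) (Set.range P) (fun k => σ (π k))) ∧
    (∀ π : ℕ → ℝ, π 0 = 0 → Monotone π → ∀ t : ℝ, 0 ≤ t →
      osc (fun s => x (τ s)) (fun k => σ (π k)) (σ t) = osc x π t) := by
  have hσ0 : σ 0 = 0 := by simpa [hτ0] using hστ 0 le_rfl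
  have hσnn : ∀ s, 0 ≤ s → 0 ≤ σ s := by
    intro s hs
    by_contra h
    push_neg at h
    have := hτm h
    rw [hτσ s hs, hτ0] at this
    exact absurd this (not_lt.mpr hs)
  have hσmono : ∀ a b, 0 ≤ a → a ≤ b → σ a ≤ σ b := by
    intro a b ha hab
    have hb : 0 ≤ b := ha.trans hab
    by_contra h
    push_neg at h
    have := hτm h
    rw [hτσ a ha, hτσ b hb] at this
    exact absurd this (not_lt.mpr hab)
  have hσlt : ∀ a b, 0 ≤ a → a < b → σ a < σ b := by
    intro a b ha hab
    refine lt_of_le_of_ne (hσmono a b ha hab.le) (fun he => ?_)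
    have : τ (σ a) = τ (σ b) := by rw [he]
    rw [hτσ a ha, hτσ b (ha.trans hab.le)] at this
    exact hab.ne this
  have hset : ∀ (π : ℕ → ℝ), π 0 = 0 → Monotone π → ∀ t, 0 ≤ t → ∀ k : ℕ,
      Set.Ico (π k) (π (k+1)) ∩ Set.Icc 0 t
        = τ '' (Set.Ico (σ (π k)) (σ (π (k+1))) ∩ Set.Icc 0 (σ t)) := by
    intro π hπ0 hπm t ht k
    have hk : 0 ≤ π k := hπ0 ▸ hπm (Nat.zero_le k)
    have hk1 : 0 ≤ π (k+1) := hπ0 ▸ hπm (Nat.zero_le (k+1))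
    ext u
    constructor
    · rintro ⟨⟨h1, h2⟩, h3, h4⟩
      refine ⟨σ u, ⟨⟨hσmono _ _ hk h1, hσlt _ _ h3 h2⟩, hσnn u h3, hσmono _ _ h3 h4⟩,
        hτσ u h3⟩
    · rintro ⟨a, ⟨⟨h1, h2⟩, h3, h4⟩, rfl⟩
      have h5 : π k ≤ τ a := by
        have := hτm.monotone h1; rwa [hτσ _ hk] at this
      have h6 : τ a < π (k+1) := by
        have := hτm h2; rwa [hτσ _ hk1] at this
      have h7 : 0 ≤ τ a := by
        have := hτm.monotone h3; rwa [hτ0] at this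
      have h8 : τ a ≤ t := by
        have := hτm.monotone h4; rwa [hτσ _ ht] at this
      exact ⟨⟨h5, h6⟩, h7, h8⟩
  constructor
  · rintro π ⟨hπ0, hπm, hπtop, hπhit, hπmin⟩
    have hknn : ∀ k : ℕ, 0 ≤ π k := fun k => hπ0 ▸ hπm.monotone (Nat.zero_le k)
    refine ⟨by simp [hπ0, hσ0], fun a b hab => hσlt _ _ (hknn a) (hπm hab), ?_, ?_, ?_⟩
    · rw [tendsto_atTop_atTop]
      intro b
      have hb' : 0 ≤ max b 0 := le_max_right _ _
      have hτb : 0 ≤ τ (max b 0) := by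
        have := hτm.monotone hb'; rwa [hτ0] at this
      obtain ⟨N, hN⟩ := (hπtop.eventually_ge_atTop (τ (max b 0))).exists_forall_of_atTop
      refine ⟨N, fun n hn => ?_⟩
      have := hσmono _ _ hτb (hN n hn)
      rw [hστ _ hb'] at this
      exact (le_max_left b 0).trans this
    · intro k
      simp only [hτσ _ (hknn _)]
      exact hπhit k
    · intro k s hs1 hs2 hmem
      have h1 : π k < τ s := by
        have := hτm hs1; rwa [hτσ _ (hknn k)] at this
      have h2 : τ s < π (k+1) := by
        have := hτm hs2; rwa [hτσ _ (hknn (k+1))] at this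
      refine hπmin k (τ s) h1 h2 ?_
      simpa [hτσ _ (hknn k)] using hmem
  · intro π hπ0 hπm t ht
    simp only [osc]
    refine iSup_congr fun k => ?_
    set S := Set.Ico (σ (π k)) (σ (π (k+1))) ∩ Set.Icc 0 (σ t) with hS
    have hSne : S ≠ univ := by
      intro h
      have : σ t + 1 ∈ S := h ▸ mem_univ _
      have := this.2.2
      linarith
    have hτS : τ '' S = Set.Ico (π k) (π (k+1)) ∩ Set.Icc 0 t :=
      (hset π hπ0 hπm t ht k).symm
    have hτSne : τ '' S ≠ univ := by
      rw [hτS]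
      intro h
      have : t + 1 ∈ Set.Ico (π k) (π (k+1)) ∩ Set.Icc 0 t := h ▸ mem_univ _
      have := this.2.2
      linarith
    calc ⨆ a ∈ S, ⨆ b ∈ S, |x (τ b) - x (τ a)|
        = ⨆ a ∈ S, ⨆ b ∈ τ '' S, |x b - x (τ a)| :=
          iSup_congr fun a => iSup_congr fun _ =>
            (real_biSup_image τ (fun b => |x b - x (τ a)|) S hSne hτSne).symm
      _ = ⨆ a ∈ τ '' S, ⨆ b ∈ τ '' S, |x b - x a| :=
          (real_biSup_image τ (fun a => ⨆ b ∈ τ '' S, |x b - x a|) S hSne hτSne).symm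
      _ = ⨆ a ∈ Set.Ico (π k) (π (k+1)) ∩ Set.Icc 0 t,
            ⨆ b ∈ Set.Ico (π k) (π (k+1)) ∩ Set.Icc 0 t, |x b - x a| := by rw [hτS]
end
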